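/- Let (X, μ) be a finite measure space, let (δ_n) ⊂ (0, 1/2) with δ_n → 0, let φ_n : X → ℝ be measurable functions converging to φ almost everywhere, and suppose there is C > 0 with ∫_X Φ_{δ_n}(φ_n(x)) dμ(x) ≤ C for all n. Then 0 ≤ φ(x) ≤ 1 for μ-almost every x ∈ X. -/

import Mathlib

/-!
The uniform entropy bound and Fatou's lemma make `liminf Φ_{δ_n}(φ_n(x))` finite for a.e. `x`.
Outside `[δ, 1 - δ]` the mobility is the constant `M(δ) = δ²(1 - δ)²`, so `Φ_δ'' = 1 / M(δ)` there,
which gives `Φ_δ' ≥ 1/δ` on `[1, ∞)` and hence `Φ_δ(ψ) ≥ (ψ - 1)/δ` for `ψ ≥ 1`; by the symmetry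
`Φ_δ(1 - ψ) = Φ_δ(ψ)` likewise `Φ_δ(ψ) ≥ -ψ/δ` for `ψ ≤ 0`. So at a point where the limit lies
outside `[0, 1]` the entropies blow up like `1/δ_n`, which is excluded almost everywhere.
-/

open MeasureTheory Filter

/-- The degenerate mobility `M(φ) = φ²(1-φ)²`. -/
noncomputable def M (φ : ℝ) : ℝ := φ ^ 2 * (1 - φ) ^ 2

/-- The truncated (nondegenerate) mobility `M_δ`. -/
noncomputable def Md (δ φ : ℝ) : ℝ :=
  if φ ≤ δ then M δ else if φ ≤ 1 - δ then M φ else M (1 - δ)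

/-- The entropy density with cutoff `Φ_δ(φ) = ∫_{1/2}^{φ} ∫_{1/2}^{s} dr ds / M_δ(r)`. -/
noncomputable def Phid (δ φ : ℝ) : ℝ :=
  ∫ s in (1 / 2 : ℝ)..φ, ∫ r in (1 / 2 : ℝ)..s, 1 / Md δ r

open Set Topology

theorem mul_sub_le_integral_of_nonneg_of_le {f : ℝ → ℝ} {a b c K : ℝ} (hab : a ≤ b) (hbc : b ≤ c)
    (hf : IntervalIntegrable f volume a c) (hf₀ : ∀ x ∈ Icc a b, 0 ≤ f x)
    (hfK : ∀ x ∈ Icc b c, K ≤ f x) : K * (c - b) ≤ ∫ x in a..c, f x := by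
  have hab' : IntervalIntegrable f volume a b :=
    hf.mono_set (uIcc_subset_uIcc_left (by simp [uIcc_of_le (hab.trans hbc), hab, hbc]))
  have hbc' : IntervalIntegrable f volume b c :=
    hf.mono_set (uIcc_subset_uIcc_right (by simp [uIcc_of_le (hab.trans hbc), hab, hbc]))
  rw [← intervalIntegral.integral_add_adjacent_intervals hab' hbc']
  have hleft : 0 ≤ ∫ x in a..b, f x := intervalIntegral.integral_nonneg hab hf₀
  have hright : ∫ _ in b..c, K ≤ ∫ x in b..c, f x :=
    intervalIntegral.integral_mono_on hbc intervalIntegrable_const hbc' hfK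
  rw [intervalIntegral.integral_const, smul_eq_mul, mul_comm] at hright
  linarith

theorem M_one_sub (x : ℝ) : M (1 - x) = M x := by
  unfold M; ring

theorem M_pos {δ : ℝ} (hδ₀ : 0 < δ) (hδ₁ : δ < 1) : 0 < M δ := by
  have : 0 < 1 - δ := by linarith
  unfold M; positivity

theorem M_le_Md {δ : ℝ} (hδ : 0 ≤ δ) (r : ℝ) : M δ ≤ Md δ r := by
  unfold Md
  split_ifs with h₁ h₂
  · exact le_rfl
  · have hprod : δ * (1 - δ) ≤ r * (1 - r) := by
      nlinarith [mul_nonneg (sub_nonneg.2 (not_le.1 h₁).le) (sub_nonneg.2 h₂)]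
    rw [show M δ = (δ * (1 - δ)) ^ 2 by unfold M; ring, show M r = (r * (1 - r)) ^ 2 by unfold M; ring]
    exact pow_le_pow_left₀ (by nlinarith) hprod 2
  · exact (M_one_sub δ).ge

theorem Md_pos {δ : ℝ} (hδ₀ : 0 < δ) (hδ₁ : δ < 1) (r : ℝ) : 0 < Md δ r :=
  (M_pos hδ₀ hδ₁).trans_le (M_le_Md hδ₀.le r)

theorem Md_one_sub (δ r : ℝ) : Md δ (1 - r) = Md δ r := by
  unfold Md
  -- the branches of the two sides differ only at the breakpoints `r = δ` and `r = 1 - δ`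
  split_ifs <;> (try simp only [M_one_sub]) <;> first
    | rfl | (exfalso; linarith) | rw [show r = δ by linarith]
    | rw [show r = 1 - δ by linarith, M_one_sub]

theorem Md_of_one_sub_le {δ r : ℝ} (h : 1 - δ ≤ r) : Md δ r = M δ := by
  rw [← Md_one_sub, Md, if_pos (by linarith)]

theorem continuous_Md (δ : ℝ) : Continuous (Md δ) := by
  have hM : Continuous M := by unfold M; fun_prop
  refine continuous_const.if_le (hM.if_le continuous_const continuous_id continuous_const ?_)
    continuous_id continuous_const ?_
  · rintro r rfl; rfl
  · rintro r rfl
    split_ifs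
    · rfl
    · exact (M_one_sub r).symm

theorem continuous_one_div_Md {δ : ℝ} (hδ₀ : 0 < δ) (hδ₁ : δ < 1) :
    Continuous fun r => 1 / Md δ r :=
  continuous_const.div (continuous_Md δ) fun r => (Md_pos hδ₀ hδ₁ r).ne'

noncomputable def PhidDeriv (δ s : ℝ) : ℝ := ∫ r in (1 / 2 : ℝ)..s, 1 / Md δ r

theorem Phid_eq_integral_PhidDeriv (δ ψ : ℝ) : Phid δ ψ = ∫ s in (1 / 2 : ℝ)..ψ, PhidDeriv δ s :=
  rfl

theorem continuous_PhidDeriv {δ : ℝ} (hδ₀ : 0 < δ) (hδ₁ : δ < 1) : Continuous (PhidDeriv δ) :=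
  intervalIntegral.continuous_primitive
    (fun _ _ => (continuous_one_div_Md hδ₀ hδ₁).intervalIntegrable _ _) _

theorem continuous_Phid {δ : ℝ} (hδ₀ : 0 < δ) (hδ₁ : δ < 1) : Continuous (Phid δ) :=
  intervalIntegral.continuous_primitive
    (fun _ _ => (continuous_PhidDeriv hδ₀ hδ₁).intervalIntegrable _ _) _

theorem PhidDeriv_one_sub (δ s : ℝ) : PhidDeriv δ (1 - s) = -PhidDeriv δ s :=
  calc PhidDeriv δ (1 - s) = ∫ r in (1 / 2 : ℝ)..(1 - s), 1 / Md δ (1 - r) := by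
        simp only [PhidDeriv, Md_one_sub]
    _ = ∫ r in s..(1 / 2 : ℝ), 1 / Md δ r := by
        rw [intervalIntegral.integral_comp_sub_left (fun r => 1 / Md δ r)]; norm_num
    _ = -PhidDeriv δ s := intervalIntegral.integral_symm _ _

theorem Phid_one_sub (δ ψ : ℝ) : Phid δ (1 - ψ) = Phid δ ψ :=
  calc Phid δ (1 - ψ) = ∫ s in (1 / 2 : ℝ)..(1 - ψ), -PhidDeriv δ (1 - s) := by
        simp only [Phid_eq_integral_PhidDeriv, PhidDeriv_one_sub, neg_neg]
    _ = -∫ s in ψ..(1 / 2 : ℝ), PhidDeriv δ s := by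
        rw [intervalIntegral.integral_neg,
          intervalIntegral.integral_comp_sub_left (PhidDeriv δ)]; norm_num
    _ = Phid δ ψ := by rw [intervalIntegral.integral_symm, neg_neg, Phid_eq_integral_PhidDeriv]

theorem PhidDeriv_nonneg {δ s : ℝ} (hδ₀ : 0 < δ) (hδ₁ : δ < 1) (hs : 1 / 2 ≤ s) :
    0 ≤ PhidDeriv δ s :=
  intervalIntegral.integral_nonneg hs fun r _ => (one_div_pos.2 (Md_pos hδ₀ hδ₁ r)).le

theorem one_div_le_PhidDeriv {δ s : ℝ} (hδ₀ : 0 < δ) (hδ : δ ≤ 1 / 2) (hs : 1 ≤ s) :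
    1 / δ ≤ PhidDeriv δ s := by
  have hδ₁ : δ < 1 := by linarith
  have hM := M_pos hδ₀ hδ₁
  have key := mul_sub_le_integral_of_nonneg_of_le (K := 1 / M δ) (by linarith) (by linarith)
    ((continuous_one_div_Md hδ₀ hδ₁).intervalIntegrable (1 / 2) s)
    (fun r _ => (one_div_pos.2 (Md_pos hδ₀ hδ₁ r)).le)
    (fun r hr => (Md_of_one_sub_le hr.1).symm ▸ le_rfl)
  refine le_trans ?_ key
  calc 1 / δ ≤ 1 / (δ * (1 - δ) ^ 2) := by
        gcongr
        exact mul_le_of_le_one_right hδ₀.le (by nlinarith)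
    _ = 1 / M δ * δ := by unfold M; field_simp
    _ ≤ 1 / M δ * (s - (1 - δ)) := by gcongr; linarith

theorem sub_one_div_le_Phid {δ ψ : ℝ} (hδ₀ : 0 < δ) (hδ : δ ≤ 1 / 2) (hψ : 1 ≤ ψ) :
    (ψ - 1) / δ ≤ Phid δ ψ := by
  have hδ₁ : δ < 1 := by linarith
  rw [div_eq_inv_mul, ← one_div, Phid_eq_integral_PhidDeriv]
  exact mul_sub_le_integral_of_nonneg_of_le (by norm_num) hψ
    ((continuous_PhidDeriv hδ₀ hδ₁).intervalIntegrable _ _)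
    (fun s hs => PhidDeriv_nonneg hδ₀ hδ₁ hs.1) (fun s hs => one_div_le_PhidDeriv hδ₀ hδ hs.1)

theorem tendsto_Phid_atTop_of_one_lt {ι : Type*} {l : Filter ι} {δ ψ : ι → ℝ} {a : ℝ}
    (hδ : Tendsto δ l (𝓝[>] 0)) (hψ : Tendsto ψ l (𝓝 a)) (ha : 1 < a) :
    Tendsto (fun i => Phid (δ i) (ψ i)) l atTop := by
  have hc : 0 < (a - 1) / 2 := by linarith
  refine tendsto_atTop_mono' l ?_ (hδ.inv_tendsto_nhdsGT_zero.const_mul_atTop hc)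
  filter_upwards [hδ (Ioo_mem_nhdsGT (by norm_num : (0 : ℝ) < 1 / 2)),
    hψ.eventually_const_lt (by linarith : (a + 1) / 2 < a)] with i hδi hψi
  calc (a - 1) / 2 * (δ i)⁻¹ ≤ (ψ i - 1) / δ i := by
        rw [div_eq_mul_inv (ψ i - 1)]
        exact mul_le_mul_of_nonneg_right (by linarith) (inv_nonneg.2 hδi.1.le)
    _ ≤ Phid (δ i) (ψ i) := sub_one_div_le_Phid hδi.1 hδi.2.le (by linarith)

theorem tendsto_Phid_atTop {ι : Type*} {l : Filter ι} {δ ψ : ι → ℝ} {a : ℝ}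
    (hδ : Tendsto δ l (𝓝[>] 0)) (hψ : Tendsto ψ l (𝓝 a)) (ha : a ∉ Icc 0 1) :
    Tendsto (fun i => Phid (δ i) (ψ i)) l atTop := by
  rcases lt_or_ge a 0 with ha₀ | ha₀
  · simp_rw [← Phid_one_sub (δ _) (ψ _)]
    exact tendsto_Phid_atTop_of_one_lt hδ (tendsto_const_nhds.sub hψ) (by linarith)
  · exact tendsto_Phid_atTop_of_one_lt hδ hψ (not_le.1 fun h => ha ⟨ha₀, h⟩)

theorem ae_liminf_lt_top_of_lintegral_le {α : Type*} [MeasurableSpace α] {μ : Measure α}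
    {f : ℕ → α → ENNReal} (hf : ∀ n, Measurable (f n)) {c : ENNReal} (hc : c ≠ ⊤)
    (hle : ∀ n, ∫⁻ x, f n x ∂μ ≤ c) : ∀ᵐ x ∂μ, liminf (fun n => f n x) atTop < ⊤ :=
  ae_lt_top (Measurable.liminf hf) <| ne_top_of_le_ne_top hc <|
    (lintegral_liminf_le hf).trans (liminf_le_of_frequently_le' (Frequently.of_forall hle))

theorem ae_limit_between_zero_and_one_general {X : Type*} [MeasurableSpace X] (μ : Measure X)
    (δ : ℕ → ℝ) (hδ : ∀ n, δ n ∈ Set.Ioo (0 : ℝ) (1 / 2))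
    (hδ0 : Tendsto δ atTop (nhds 0))
    (φn : ℕ → X → ℝ) (hφn : ∀ n, Measurable (φn n)) (φ : X → ℝ)
    (hae : ∀ᵐ x ∂μ, Tendsto (fun n => φn n x) atTop (nhds (φ x)))
    (C : ℝ)
    (hent : ∀ n, ∫⁻ x, ENNReal.ofReal (Phid (δ n) (φn n x)) ∂μ ≤ ENNReal.ofReal C) :
    ∀ᵐ x ∂μ, 0 ≤ φ x ∧ φ x ≤ 1 := by
  have hδ' : Tendsto δ atTop (𝓝[>] 0) :=
    tendsto_nhdsWithin_iff.2 ⟨hδ0, Eventually.of_forall fun n => (hδ n).1⟩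
  have hmeas (n : ℕ) : Measurable fun x => ENNReal.ofReal (Phid (δ n) (φn n x)) :=
    ENNReal.measurable_ofReal.comp
      ((continuous_Phid (hδ n).1 (by linarith [(hδ n).2])).measurable.comp (hφn n))
  filter_upwards [hae, ae_liminf_lt_top_of_lintegral_le hmeas ENNReal.ofReal_ne_top hent]
    with x hx hfin
  by_contra hout
  have hblowup := ENNReal.tendsto_ofReal_atTop.comp (tendsto_Phid_atTop hδ' hx hout)
  exact hfin.ne hblowup.liminf_eq

/-- A uniform entropy bound along a vanishing sequence of cutoffs forces the a.e.
limit to satisfy `0 ≤ φ ≤ 1`. -/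
theorem ae_limit_between_zero_and_one {X : Type*} [MeasurableSpace X] (μ : Measure X)
    [IsFiniteMeasure μ] (δ : ℕ → ℝ) (hδ : ∀ n, δ n ∈ Set.Ioo (0 : ℝ) (1 / 2))
    (hδ0 : Tendsto δ atTop (nhds 0))
    (φn : ℕ → X → ℝ) (hφn : ∀ n, Measurable (φn n)) (φ : X → ℝ)
    (hae : ∀ᵐ x ∂μ, Tendsto (fun n => φn n x) atTop (nhds (φ x)))
    (C : ℝ) (hC : 0 < C)
    (hent : ∀ n, ∫⁻ x, ENNReal.ofReal (Phid (δ n) (φn n x)) ∂μ ≤ ENNReal.ofReal C) :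
    ∀ᵐ x ∂μ, 0 ≤ φ x ∧ φ x ≤ 1 :=
  ae_limit_between_zero_and_one_general μ δ hδ hδ0 φn hφn φ hae C hent
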